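/- arXiv:1204.0636 — 3 statements merged into one kernel-verified Lean document; each statement's English description precedes it below -/
import Mathlib

section
/- Let Σ be an alphabet with n ≥ 1 symbols. The set Σ_dw* (all distinguished words over Σ together with the empty word λ) is a finite set, and its cardinality equals σ_n = 1 + 2·n! + 2·∑_{k=1}^{n−1} n!/(n−k)!. -/
/-! A simple word of length `k` is an embedding `Fin k ↪ Σ`, so there are `n!/(n-k)!` of them
for `1 ≤ k ≤ n` and none longer. Appending its first letter is a bijection from simple words
onto simple cyclic words, so `σ_n = 1 + 2 ∑_{k=1}^{n} n!/(n-k)!`, whose `k = n` term is `n!`. -/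

attribute [local instance] Classical.propDecidable

/-- A simple word over an alphabet: a nonempty word with pairwise distinct letters. -/
def IsSimpleWord {α : Type*} (w : List α) : Prop := w ≠ [] ∧ w.Nodup

/-- A simple cyclic word: a word of the form `a₁…a_k a₁` with `a₁…a_k` a simple word. -/
def IsCyclicWord {α : Type*} (w : List α) : Prop :=
  ∃ (a : α) (l : List α), (a :: l).Nodup ∧ w = (a :: l) ++ [a]

/-- `Σ_dw*`: the set of distinguished words over `α`, together with the empty word `λ = []`. -/
def DW (α : Type*) : Set (List α) :=
  {w | w = [] ∨ IsSimpleWord w ∨ IsCyclicWord w}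

/-- The latin composition of (distinguished) words.  If either word is `λ` or a simple
cyclic word the result is `λ`; for simple words `x = a₁…a_k`, `y = b₁…b_r`:
`x ∘ℓ y = a₁…a_k b₂…b_r` if `a_k = b₁` and `{a₁,…,a_k} ∩ {b₂,…,b_r} = ∅`;
`x ∘ℓ y = a₁…a_k b₂…b_{r-1} a₁` if `a_k = b₁`, `b_r = a₁` and
`{a₁,…,a_k} ∩ {b₂,…,b_{r-1}} = ∅`; and `x ∘ℓ y = λ` otherwise. -/
noncomputable def latin {α : Type*} (x y : List α) : List α :=
  if IsSimpleWord x ∧ IsSimpleWord y then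
    if x.getLast? = y.head? ∧ ∀ a ∈ x, a ∉ y.tail then
      x ++ y.tail
    else if x.getLast? = y.head? ∧ y.getLast? = x.head? ∧ ∀ a ∈ x, a ∉ y.tail.dropLast then
      x ++ y.tail.dropLast ++ x.head?.toList
    else []
  else []

section Words

variable {α : Type*}

theorem setOf_nodup_length_eq_range_ofFn (k : ℕ) :
    {l : List α | l.Nodup ∧ l.length = k} = Set.range fun f : Fin k ↪ α => List.ofFn f := by
  ext l
  constructor
  · rintro ⟨hl, rfl⟩
    exact ⟨⟨l.get, List.nodup_iff_injective_get.mp hl⟩, List.ofFn_get l⟩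
  · rintro ⟨f, rfl⟩
    exact ⟨List.nodup_ofFn.mpr f.injective, List.length_ofFn⟩

theorem ncard_setOf_nodup_length_eq [Fintype α] (k : ℕ) :
    {l : List α | l.Nodup ∧ l.length = k}.ncard = (Fintype.card α).descFactorial k := by
  rw [setOf_nodup_length_eq_range_ofFn,
    Set.ncard_range_of_injective fun f g h => DFunLike.coe_injective (List.ofFn_injective h),
    Nat.card_eq_fintype_card, Fintype.card_embedding_eq, Fintype.card_fin]

theorem setOf_isSimpleWord_eq_biUnion [Fintype α] :
    {w : List α | IsSimpleWord w} =
      ⋃ k ∈ Finset.Icc 1 (Fintype.card α), {l | l.Nodup ∧ l.length = k} := by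
  ext w
  simp only [IsSimpleWord, Set.mem_ofPred_eq, Set.mem_iUnion, Finset.mem_Icc, exists_prop]
  constructor
  · rintro ⟨hw, hnd⟩
    exact ⟨w.length, ⟨List.length_pos_iff.mpr hw, hnd.length_le_card⟩, hnd, rfl⟩
  · rintro ⟨k, ⟨hk, -⟩, hnd, rfl⟩
    exact ⟨List.ne_nil_of_length_pos hk, hnd⟩

theorem finite_setOf_isSimpleWord [Fintype α] : {w : List α | IsSimpleWord w}.Finite := by
  rw [setOf_isSimpleWord_eq_biUnion]
  exact (Finset.finite_toSet _).biUnion fun k _ =>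
    (List.finite_length_eq α k).subset fun _ hl => hl.2

theorem ncard_setOf_isSimpleWord [Fintype α] :
    {w : List α | IsSimpleWord w}.ncard =
      ∑ k ∈ Finset.Icc 1 (Fintype.card α), (Fintype.card α).descFactorial k := by
  have hdisj : (Finset.Icc 1 (Fintype.card α) : Set ℕ).PairwiseDisjoint
      fun k => {l : List α | l.Nodup ∧ l.length = k} :=
    fun i _ j _ hij => Set.disjoint_left.mpr fun l hi hj => hij (hi.2.symm.trans hj.2)
  rw [setOf_isSimpleWord_eq_biUnion, ← Finset.set_biUnion_coe,
    (Finset.finite_toSet _).ncard_biUnion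
      (fun k _ => (List.finite_length_eq α k).subset fun _ hl => hl.2) hdisj,
    finsum_mem_coe_finset]
  exact Finset.sum_congr rfl fun k _ => ncard_setOf_nodup_length_eq k

theorem append_take_one_injective : Function.Injective fun w : List α => w ++ w.take 1 := by
  intro w v h
  have hlen := congrArg List.length h
  simp only [List.length_append, List.length_take] at hlen
  exact (List.append_inj h (by omega)).1

theorem setOf_isCyclicWord_eq_image :
    {w : List α | IsCyclicWord w} = (fun w => w ++ w.take 1) '' {w | IsSimpleWord w} := by
  ext w
  constructor
  · rintro ⟨a, l, hnd, rfl⟩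
    exact ⟨a :: l, ⟨List.cons_ne_nil a l, hnd⟩, by simp⟩
  · rintro ⟨_ | ⟨a, l⟩, ⟨hne, hnd⟩, rfl⟩
    · exact absurd rfl hne
    · exact ⟨a, l, hnd, by simp⟩

theorem disjoint_setOf_isSimpleWord_isCyclicWord :
    Disjoint {w : List α | IsSimpleWord w} {w | IsCyclicWord w} := by
  rw [Set.disjoint_left]
  rintro w ⟨-, hnd⟩ ⟨a, l, -, rfl⟩
  simp [List.nodup_append] at hnd

theorem DW_eq_insert_nil_union :
    DW α = insert [] ({w | IsSimpleWord w} ∪ {w | IsCyclicWord w}) :=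
  rfl

theorem finite_DW [Fintype α] : (DW α).Finite := by
  rw [DW_eq_insert_nil_union, setOf_isCyclicWord_eq_image]
  exact (finite_setOf_isSimpleWord.union (finite_setOf_isSimpleWord.image _)).insert []

theorem ncard_DW [Fintype α] :
    (DW α).ncard =
      1 + 2 * ∑ k ∈ Finset.Icc 1 (Fintype.card α), (Fintype.card α).descFactorial k := by
  have hnil : [] ∉ {w : List α | IsSimpleWord w} ∪ {w | IsCyclicWord w} := by
    rintro (⟨hne, -⟩ | ⟨a, l, -, h⟩)
    · exact hne rfl
    · simp at h
  have hS := finite_setOf_isSimpleWord (α := α)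
  have hC : {w : List α | IsCyclicWord w}.Finite := by
    rw [setOf_isCyclicWord_eq_image]
    exact hS.image _
  rw [DW_eq_insert_nil_union, Set.ncard_insert_of_notMem hnil (hS.union hC),
    Set.ncard_union_eq disjoint_setOf_isSimpleWord_isCyclicWord hS hC,
    setOf_isCyclicWord_eq_image, append_take_one_injective.injOn.ncard_image,
    ncard_setOf_isSimpleWord]
  ring

end Words

theorem sum_Icc_one_descFactorial {n : ℕ} (hn : 1 ≤ n) :
    ∑ k ∈ Finset.Icc 1 n, n.descFactorial k =
      n.factorial + ∑ k ∈ Finset.Icc 1 (n - 1), n.factorial / (n - k).factorial := by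
  obtain ⟨m, rfl⟩ := Nat.exists_eq_add_of_le' hn
  rw [Finset.sum_Icc_succ_top (by omega), Nat.descFactorial_self, add_comm, Nat.add_sub_cancel]
  congr 1
  refine Finset.sum_congr rfl fun k hk => Nat.descFactorial_eq_div ?_
  have := (Finset.mem_Icc.mp hk).2
  omega

/-- for an alphabet with `n ≥ 1` symbols, the set `Σ_dw*` of distinguished
words together with `λ` is finite, of cardinality
`σ_n = 1 + 2·n! + 2·∑_{k=1}^{n-1} n!/(n-k)!`. -/
theorem dw_finite_card (n : ℕ) (hn : 1 ≤ n) :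
    (DW (Fin n)).Finite ∧
      (DW (Fin n)).ncard =
        1 + 2 * n.factorial +
          2 * ∑ k ∈ Finset.Icc 1 (n - 1), n.factorial / (n - k).factorial := by
  refine ⟨finite_DW, ?_⟩
  rw [ncard_DW, Fintype.card_fin, sum_Icc_one_descFactorial hn]
  ring
end

section
/- Let G = (V, E) be a directed graph on n vertices with latin matrix L and latin powers L^[k]. For all i ≠ j and all k with 1 ≤ k ≤ n − 1, the words of L^[k]_{ij} other than λ are exactly the vertex sequences of the elementary paths of length k from v_i to v_j: a word w belongs to L^[k]_{ij} \ {λ} if and only if w is a list (w₀, w₁, …, w_k) of k+1 pairwise distinct vertices with w₀ = v_i, w_k = v_j, and (w_t, w_{t+1}) ∈ E for all 0 ≤ t ≤ k − 1. -/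
attribute [local instance] Classical.propDecidable

/-- A distinguished language over `α`: a set of distinguished words containing `λ`. -/
def IsDLang {α : Type*} (L : Set (List α)) : Prop := L ⊆ DW α ∧ [] ∈ L

/-- The latin composition of languages: `L₁ ∘ℓ L₂ = {x ∘ℓ y : x ∈ L₁, y ∈ L₂}`. -/
def latinLang {α : Type*} (L₁ L₂ : Set (List α)) : Set (List α) :=
  {w | ∃ x ∈ L₁, ∃ y ∈ L₂, w = latin x y}

/-- The latin matrix of the directed graph `G = (Fin n, E)`: entry `(i,j)` is the
distinguished language `{λ, v_i v_j}` if `(v_i, v_j) ∈ E`, and `{λ}` otherwise. -/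
noncomputable def latinMat {n : ℕ} (E : Set (Fin n × Fin n)) :
    Fin n → Fin n → Set (List (Fin n)) :=
  fun i j => if (i, j) ∈ E then {[], [i, j]} else {[]}

/-- Matrix product over the semiring of distinguished languages:
`(M ∘ℓ N)_{ij} = ⋃_m M_{im} ∘ℓ N_{mj}`. -/
def latinMatMul {n : ℕ} (M N : Fin n → Fin n → Set (List (Fin n))) :
    Fin n → Fin n → Set (List (Fin n)) :=
  fun i j => ⋃ m : Fin n, latinLang (M i m) (N m j)

/-- Latin powers of a matrix: `L^[1] = L` and `L^[k] = L ∘ℓ L^[k-1]` for `k ≥ 2`. -/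
noncomputable def latinPow {n : ℕ} (M : Fin n → Fin n → Set (List (Fin n))) :
    ℕ → Fin n → Fin n → Set (List (Fin n))
  | 0 => fun _ _ => {[]}
  | 1 => M
  | k + 2 => latinMatMul M (latinPow M (k + 1))

/-! Prefixing a word `y` by an edge `[a, b]` can only produce `a :: y`: the first clause of
`∘ℓ` appends an elementary path, the second closes a cycle at `a`. So by induction the nonempty
words of `L^[k]_{ij}` are walks of length `k` from `i` to `j`; when `i ≠ j` the cycle-closing
clause cannot fire, so these walks are elementary, and conversely an elementary path
`i :: y` is `[i, m] ∘ℓ y` by the first clause. -/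

section Walk

variable {α : Type*} {E : Set (α × α)} {k : ℕ} {i j : α} {w : List α}

def IsWalk (E : Set (α × α)) (k : ℕ) (i j : α) (w : List α) : Prop :=
  w.length = k + 1 ∧ w.head? = some i ∧ w.getLast? = some j ∧
    w.IsChain (fun a b => (a, b) ∈ E)

theorem isWalk_one_iff : IsWalk E 1 i j w ↔ w = [i, j] ∧ (i, j) ∈ E := by
  constructor
  · rintro ⟨hlen, hhead, hlast, hchain⟩
    obtain ⟨a, b, rfl⟩ := List.length_eq_two.1 hlen
    simp_all
  · rintro ⟨rfl, hE⟩
    simpa [IsWalk] using hE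

theorem IsWalk.cons {m : α} {y : List α} (hE : (i, m) ∈ E) (hy : IsWalk E k m j y) :
    IsWalk E (k + 1) i j (i :: y) := by
  obtain ⟨hlen, hhead, hlast, hchain⟩ := hy
  obtain ⟨t, rfl⟩ : ∃ t, y = m :: t := ⟨y.tail, List.eq_cons_of_mem_head? hhead⟩
  exact ⟨by simpa using hlen, rfl, by simpa using hlast,
    List.isChain_cons_cons.2 ⟨hE, hchain⟩⟩

theorem IsWalk.exists_cons (hw : IsWalk E (k + 1) i j w) :
    ∃ m y, w = i :: y ∧ (i, m) ∈ E ∧ IsWalk E k m j y := by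
  obtain ⟨hlen, hhead, hlast, hchain⟩ := hw
  match w, hlen, hhead with
  | i :: m :: t, hlen, rfl =>
    obtain ⟨hE, hchain⟩ := List.isChain_cons_cons.1 hchain
    exact ⟨m, m :: t, rfl, hE, by simpa using hlen, rfl, by simpa using hlast, hchain⟩

end Walk

section Latin

variable {α : Type*} {a b : α}

theorem latin_nil_left (y : List α) : latin [] y = [] := by
  simp [latin, IsSimpleWord]

theorem latin_nil_right (x : List α) : latin x [] = [] := by
  simp [latin, IsSimpleWord]

theorem latin_pair_of_ne_nil {y : List α} (h : latin [a, b] y ≠ []) :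
    latin [a, b] y = a :: y ∧ ((a :: y).Nodup ∨ y.getLast? = some a) := by
  cases y with
  | nil => exact absurd (latin_nil_right _) h
  | cons c t =>
    unfold latin at h ⊢
    split_ifs at h ⊢ with hs hA hB
    · obtain ⟨rfl : b = c, hat⟩ := by simpa using hA
      exact ⟨rfl, Or.inl (by simp_all [IsSimpleWord])⟩
    · obtain ⟨rfl : b = c, hlast, -⟩ := by simpa using hB
      have ht : t ≠ [] := by rintro rfl; simp_all [IsSimpleWord]
      rw [List.getLast?_cons_of_ne_nil ht] at hlast
      obtain ⟨s, rfl⟩ := List.getLast?_eq_some_iff.1 hlast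
      exact ⟨by simp, Or.inr (by rw [List.getLast?_cons_of_ne_nil ht, hlast])⟩
    all_goals exact absurd rfl h

theorem latin_pair_cons_of_not_mem {t : List α} (hab : a ≠ b) (hbt : (b :: t).Nodup)
    (hat : a ∉ t) : latin [a, b] (b :: t) = a :: b :: t := by
  have hs : IsSimpleWord [a, b] ∧ IsSimpleWord (b :: t) :=
    ⟨⟨by simp, by simp [hab]⟩, by simp, hbt⟩
  have hA : [a, b].getLast? = (b :: t).head? ∧ ∀ x ∈ [a, b], x ∉ (b :: t).tail := by
    simp_all
  rw [latin, if_pos hs, if_pos hA]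
  rfl

end Latin

section LatinMatrix

variable {n : ℕ} {E : Set (Fin n × Fin n)} {k : ℕ} {i j : Fin n} {w : List (Fin n)}

theorem mem_latinMat_iff : w ∈ latinMat E i j ↔ w = [] ∨ w = [i, j] ∧ (i, j) ∈ E := by
  unfold latinMat
  split_ifs with hE <;> simp [hE]

theorem mem_latinPow_add_two_iff (hw : w ≠ []) :
    w ∈ latinPow (latinMat E) (k + 2) i j ↔
      ∃ m, (i, m) ∈ E ∧ ∃ y ∈ latinPow (latinMat E) (k + 1) m j, w = latin [i, m] y := by
  simp only [latinPow, latinMatMul, latinLang, Set.mem_iUnion, Set.mem_ofPred_eq, mem_latinMat_iff]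
  constructor
  · rintro ⟨m, x, rfl | ⟨rfl, hE⟩, y, hy, rfl⟩
    · exact absurd (latin_nil_left y) hw
    · exact ⟨m, hE, y, hy, rfl⟩
  · rintro ⟨m, hE, y, hy, rfl⟩
    exact ⟨m, _, Or.inr ⟨rfl, hE⟩, y, hy, rfl⟩

theorem isWalk_of_mem_latinPow (hw : w ∈ latinPow (latinMat E) (k + 1) i j) (hne : w ≠ []) :
    IsWalk E (k + 1) i j w := by
  induction k generalizing i w with
  | zero => exact isWalk_one_iff.2 ((mem_latinMat_iff.1 hw).resolve_left hne)
  | succ k ih =>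
    obtain ⟨m, hE, y, hy, rfl⟩ := (mem_latinPow_add_two_iff hne).1 hw
    obtain ⟨hcons, -⟩ := latin_pair_of_ne_nil hne
    have hy_ne : y ≠ [] := by rintro rfl; exact hne (latin_nil_right _)
    rw [hcons]
    exact (ih hy hy_ne).cons hE

theorem nodup_of_mem_latinPow (hij : i ≠ j) (hw : w ∈ latinPow (latinMat E) (k + 1) i j)
    (hne : w ≠ []) : w.Nodup := by
  cases k with
  | zero =>
    obtain ⟨rfl, -⟩ := (mem_latinMat_iff.1 hw).resolve_left hne
    simpa using hij
  | succ k =>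
    obtain ⟨m, -, y, hy, rfl⟩ := (mem_latinPow_add_two_iff hne).1 hw
    obtain ⟨hcons, hnd | hlast⟩ := latin_pair_of_ne_nil hne
    · rwa [hcons]
    · have hy_ne : y ≠ [] := by rintro rfl; exact hne (latin_nil_right _)
      have hlast_j : y.getLast? = some j := (isWalk_of_mem_latinPow hy hy_ne).2.2.1
      exact absurd (Option.some.inj (hlast.symm.trans hlast_j)) hij

theorem mem_latinPow_of_isWalk (hw : IsWalk E (k + 1) i j w) (hnd : w.Nodup) :
    w ∈ latinPow (latinMat E) (k + 1) i j := by
  induction k generalizing i w with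
  | zero => exact mem_latinMat_iff.2 (Or.inr (isWalk_one_iff.1 hw))
  | succ k ih =>
    obtain ⟨m, y, rfl, hE, hy⟩ := hw.exists_cons
    obtain ⟨t, rfl⟩ : ∃ t, y = m :: t := ⟨y.tail, List.eq_cons_of_mem_head? hy.2.1⟩
    obtain ⟨him, hit⟩ : i ≠ m ∧ i ∉ t := by simpa using (List.nodup_cons.1 hnd).1
    have hy_nd := (List.nodup_cons.1 hnd).2
    refine (mem_latinPow_add_two_iff (List.cons_ne_nil _ _)).2 ⟨m, hE, m :: t, ih hy hy_nd, ?_⟩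
    exact (latin_pair_cons_of_not_mem him hy_nd hit).symm

end LatinMatrix

theorem latinPow_elementary_paths_general (n : ℕ) (E : Set (Fin n × Fin n))
    (i j : Fin n) (hij : i ≠ j) (k : ℕ) (hk1 : 1 ≤ k)
    (w : List (Fin n)) :
    (w ∈ latinPow (latinMat E) k i j ∧ w ≠ []) ↔
      (w.length = k + 1 ∧ w.Nodup ∧ w.head? = some i ∧ w.getLast? = some j ∧
        w.Chain' (fun a b => (a, b) ∈ E)) := by
  obtain ⟨k, rfl⟩ := Nat.exists_eq_add_of_le' hk1
  constructor
  · rintro ⟨hw, hne⟩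
    obtain ⟨hlen, hhead, hlast, hchain⟩ := isWalk_of_mem_latinPow hw hne
    exact ⟨hlen, nodup_of_mem_latinPow hij hw hne, hhead, hlast, hchain⟩
  · rintro ⟨hlen, hnd, hhead, hlast, hchain⟩
    exact ⟨mem_latinPow_of_isWalk ⟨hlen, hhead, hlast, hchain⟩ hnd,
      List.ne_nil_of_length_eq_add_one hlen⟩

/-- for `i ≠ j` and `1 ≤ k ≤ n - 1`, the words of `L^[k]_{ij}` other than
`λ` are exactly the vertex sequences of the elementary paths of length `k` from `v_i`
to `v_j`: lists `(w₀, …, w_k)` of `k+1` pairwise distinct vertices with `w₀ = v_i`,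
`w_k = v_j` and `(w_t, w_{t+1}) ∈ E` for all `t`. -/
theorem latinPow_elementary_paths (n : ℕ) (hn : 1 ≤ n) (E : Set (Fin n × Fin n))
    (i j : Fin n) (hij : i ≠ j) (k : ℕ) (hk1 : 1 ≤ k) (hk2 : k ≤ n - 1)
    (w : List (Fin n)) :
    (w ∈ latinPow (latinMat E) k i j ∧ w ≠ []) ↔
      (w.length = k + 1 ∧ w.Nodup ∧ w.head? = some i ∧ w.getLast? = some j ∧
        w.Chain' (fun a b => (a, b) ∈ E)) :=
  latinPow_elementary_paths_general n E i j hij k hk1 w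
end

section
/- Let G = (V, E) be a directed graph on n vertices with latin matrix L and latin powers L^[k]. For all i and all k with 1 ≤ k ≤ n, the words of L^[k]_{ii} other than λ are exactly the vertex sequences of the elementary circuits of length k starting at v_i: a word w belongs to L^[k]_{ii} \ {λ} if and only if w is a list (w₀, w₁, …, w_k) of k+1 vertices with w₀ = w_k = v_i, the vertices w₀, …, w_{k−1} pairwise distinct, and (w_t, w_{t+1}) ∈ E for all 0 ≤ t ≤ k − 1. -/
attribute [local instance] Classical.propDecidable

/-!
By induction on `k`, the nonempty words of `L^[k]_{ij}` are exactly the elementary paths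
`i = w₀ → w₁ → ⋯ → w_k = j` in which `w₀, …, w_{k-1}` are distinct and `j` may only coincide
with `w₀`. The induction step composes an edge `[i, m]` with such a path from `m` to `j`: the
latin product is nonzero exactly when `i` is new to the path, and then it is the concatenated
path — by the first clause of `∘ℓ` when `i ≠ j`, by the cyclic clause when `i = j`.
-/

section Words

variable {α : Type*}

theorem latin_pair_cons_append_singleton (i m j : α) {v : List α} (hv : (m :: v).Nodup)
    (hjv : j ∉ v) :
    latin [i, m] (m :: v ++ [j]) = if i ≠ m ∧ m ≠ j ∧ i ∉ v then i :: m :: v ++ [j] else [] := by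
  by_cases him : i = m
  · subst him; simp [latin, IsSimpleWord]
  by_cases hmj : m = j
  · subst hmj; simp [latin, IsSimpleWord]
  by_cases hiv : i ∈ v
  · simp [latin, hiv]
  have hmv : m ∉ v := (List.nodup_cons.mp hv).1
  have hsimple : IsSimpleWord [i, m] ∧ IsSimpleWord (m :: v ++ [j]) := by
    refine ⟨⟨by simp, by simp [him]⟩, by simp, ?_⟩
    rw [← List.concat_eq_append, List.nodup_concat]
    exact ⟨by simp [Ne.symm hmj, hjv], hv⟩
  rw [if_pos ⟨him, hmj, hiv⟩, latin, if_pos hsimple]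
  by_cases hij : i = j
  · subst hij
    rw [if_neg (by simp), if_pos ⟨by simp, by simp [List.getLast?_cons], by simp [hiv, hmv]⟩]
    simp
  · rw [if_pos (by simp [hiv, hij, hmv, hmj])]
    simp

theorem List.exists_eq_cons_append_singleton {w : List α} (hw : 2 ≤ w.length) {a b : α}
    (ha : w.head? = some a) (hb : w.getLast? = some b) : ∃ u, w = a :: u ++ [b] := by
  obtain _ | ⟨c, t⟩ := w
  · simp at hw
  have ht : t ≠ [] := by rintro rfl; simp at hw
  obtain rfl : c = a := by simpa using ha
  obtain rfl : t.getLast ht = b := by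
    simpa [List.getLast?_cons, List.getLast?_eq_some_getLast ht] using hb
  exact ⟨t.dropLast, by simp [List.dropLast_append_getLast]⟩

end Words

section LatinMatrix

variable {n : ℕ} {E : Set (Fin n × Fin n)}

theorem mem_latinMat {i j : Fin n} {x : List (Fin n)} :
    x ∈ latinMat E i j ↔ x = [] ∨ (i, j) ∈ E ∧ x = [i, j] := by
  unfold latinMat
  split_ifs with hE <;> simp [hE]

theorem latinPow_succ (M : Fin n → Fin n → Set (List (Fin n))) {k : ℕ} (hk : 1 ≤ k) :
    latinPow M (k + 1) = latinMatMul M (latinPow M k) := by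
  obtain ⟨k, rfl⟩ := Nat.exists_eq_add_of_le' hk
  rfl

theorem mem_latinPow_latinMat_and_ne_nil_iff {k : ℕ} (hk : 1 ≤ k) {i j : Fin n}
    {w : List (Fin n)} :
    (w ∈ latinPow (latinMat E) k i j ∧ w ≠ []) ↔
      ∃ u, w = i :: u ++ [j] ∧ u.length + 1 = k ∧ (i :: u).Nodup ∧ j ∉ u ∧
        w.IsChain (fun a b => (a, b) ∈ E) := by
  induction k, hk using Nat.le_induction generalizing i w with
  | base =>
    simp only [latinPow, mem_latinMat]
    constructor
    · rintro ⟨rfl | ⟨hE, rfl⟩, hne⟩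
      · exact absurd rfl hne
      · exact ⟨[], rfl, rfl, by simp, by simp, by simpa⟩
    · rintro ⟨_ | ⟨a, u⟩, rfl, hlen, -, -, hch⟩
      · exact ⟨Or.inr ⟨by simpa using hch, rfl⟩, by simp⟩
      · simp at hlen
  | succ k hk IH =>
    simp only [latinPow_succ _ hk, latinMatMul, latinLang, Set.mem_iUnion, Set.mem_ofPred_eq]
    constructor
    · rintro ⟨⟨m, x, hx, y, hy, rfl⟩, hne⟩
      obtain rfl | ⟨hE, rfl⟩ := mem_latinMat.1 hx
      · simp [latin, IsSimpleWord] at hne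
      obtain rfl | hy0 := eq_or_ne y []
      · simp [latin, IsSimpleWord] at hne
      obtain ⟨v, rfl, hlen, hnd, hjv, hch⟩ := IH.1 ⟨hy, hy0⟩
      rw [latin_pair_cons_append_singleton i m j hnd hjv] at hne ⊢
      split_ifs at hne ⊢ with hc
      · obtain ⟨him, hmj, hiv⟩ := hc
        refine ⟨m :: v, rfl, by simpa using hlen, ?_, ?_, ?_⟩
        · exact List.nodup_cons.2 ⟨by simp [him, hiv], hnd⟩
        · simp [Ne.symm hmj, hjv]
        · simpa [hE] using hch
      · exact absurd rfl hne
    · rintro ⟨_ | ⟨m, v⟩, rfl, hlen, hnd, hju, hch⟩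
      · simp at hlen; omega
      simp only [List.nodup_cons, List.mem_cons, not_or] at hnd hju
      obtain ⟨hE, hch⟩ : (i, m) ∈ E ∧ (m :: v ++ [j]).IsChain (fun a b => (a, b) ∈ E) := by
        simpa using hch
      refine ⟨⟨m, [i, m], mem_latinMat.2 (Or.inr ⟨hE, rfl⟩), m :: v ++ [j], ?_, ?_⟩, by simp⟩
      · exact (IH.2 ⟨v, rfl, by simpa using hlen, List.nodup_cons.2 hnd.2, hju.2, hch⟩).1
      · rw [latin_pair_cons_append_singleton i m j (List.nodup_cons.2 hnd.2) hju.2,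
          if_pos ⟨hnd.1.1, Ne.symm hju.1, hnd.1.2⟩]

end LatinMatrix

theorem latinPow_elementary_circuits_general (n : ℕ) (E : Set (Fin n × Fin n))
    (i : Fin n) (k : ℕ) (hk1 : 1 ≤ k) (w : List (Fin n)) :
    (w ∈ latinPow (latinMat E) k i i ∧ w ≠ []) ↔
      (w.length = k + 1 ∧ w.head? = some i ∧ w.getLast? = some i ∧
        w.dropLast.Nodup ∧ w.Chain' (fun a b => (a, b) ∈ E)) := by
  rw [mem_latinPow_latinMat_and_ne_nil_iff hk1]
  constructor
  · rintro ⟨u, rfl, hlen, hnd, -, hch⟩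
    rw [List.dropLast_concat]
    exact ⟨by simp; omega, rfl, List.getLast?_concat, hnd, hch⟩
  · rintro ⟨hlen, hhead, hlast, hnd, hch⟩
    obtain ⟨u, rfl⟩ := List.exists_eq_cons_append_singleton (by omega) hhead hlast
    rw [List.dropLast_concat] at hnd
    exact ⟨u, rfl, by simp at hlen; omega, hnd, (List.nodup_cons.1 hnd).1, hch⟩

/-- for every `i` and `1 ≤ k ≤ n`, the words of `L^[k]_{ii}` other than `λ`
are exactly the vertex sequences of the elementary circuits of length `k` starting at
`v_i`: lists `(w₀, …, w_k)` of `k+1` vertices with `w₀ = w_k = v_i`, the vertices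
`w₀, …, w_{k-1}` pairwise distinct, and `(w_t, w_{t+1}) ∈ E` for all `t`. -/
theorem latinPow_elementary_circuits (n : ℕ) (hn : 1 ≤ n) (E : Set (Fin n × Fin n))
    (i : Fin n) (k : ℕ) (hk1 : 1 ≤ k) (hk2 : k ≤ n) (w : List (Fin n)) :
    (w ∈ latinPow (latinMat E) k i i ∧ w ≠ []) ↔
      (w.length = k + 1 ∧ w.head? = some i ∧ w.getLast? = some i ∧
        w.dropLast.Nodup ∧ w.Chain' (fun a b => (a, b) ∈ E)) :=
  latinPow_elementary_circuits_general n E i k hk1 w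
end
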